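/- Let μ: 𝓒₁(Σ) → 𝓣₁(Σ) map a rank-1 cluster t with bottom boundary node labelled a to the tree context obtained by replacing that node with a(x), and let φ(t) remove the root of μ(t). Then for clusters s, t: φ(s) ⊡ φ(t) = φ(s ⊙ t) whenever the horizontal merge s ⊙ t is defined, and φ(s) ⊟ φ(t) = φ(s ⊘ t) whenever the vertical merge s ⊘ t is defined (with φ(t) = (t minus its root) for rank-0 clusters t). -/
import Mathlib


/-- Trees over `Σ ∪ {x}`: `param` is the parameter `x`. -/
inductive CTree (σ : Type) : Type
  | param : CTree σ
  | node : σ → List (CTree σ) → CTree σ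

mutual
/-- Substitute the forest `g` for every occurrence of the parameter. -/
def substT {σ : Type} (g : List (CTree σ)) : CTree σ → List (CTree σ)
  | .param => g
  | .node a l => [.node a (substF g l)]
def substF {σ : Type} (g : List (CTree σ)) : List (CTree σ) → List (CTree σ)
  | [] => []
  | t :: ts => substT g t ++ substF g ts
end

/-- Clusters are modelled as trees labelled by `σ × Bool`, the Boolean flag
marking the bottom boundary node (`true` = underlined). -/
abbrev Cluster (σ : Type) : Type := CTree (σ × Bool)

mutual
/-- Number of marked (underlined) nodes in a tree. -/
def marksT {σ : Type} : Cluster σ → Nat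
  | .param => 0
  | .node (_, b) l => (if b then 1 else 0) + marksF l
def marksF {σ : Type} : List (Cluster σ) → Nat
  | [] => 0
  | t :: ts => marksT t + marksF ts
end

mutual
/-- Well-formedness: no parameters occur, and every marked node is a leaf. -/
def goodT {σ : Type} : Cluster σ → Prop
  | .param => False
  | .node (_, b) l => (b = true → l = []) ∧ goodF l
def goodF {σ : Type} : List (Cluster σ) → Prop
  | [] => True
  | t :: ts => goodT t ∧ goodF ts
end

mutual
/-- The list of labels of marked nodes, in left-to-right order. -/
def markLabelsT {σ : Type} : Cluster σ → List σ
  | .param => []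
  | .node (a, b) l => (if b then [a] else []) ++ markLabelsF l
def markLabelsF {σ : Type} : List (Cluster σ) → List σ
  | [] => []
  | t :: ts => markLabelsT t ++ markLabelsF ts
end

mutual
/-- `μ` maps a cluster to a tree context over `Σ`: the marked bottom boundary
leaf `ā` is replaced by `a(x)`. -/
def muT {σ : Type} : Cluster σ → CTree σ
  | .param => .param
  | .node (a, b) l => if b then .node a [.param] else .node a (muF l)
def muF {σ : Type} : List (Cluster σ) → List (CTree σ)
  | [] => []
  | t :: ts => muT t :: muF ts
end

/-- `φ(t) = Δ(μ(t))`: remove the root of `μ(t)`. -/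
def phiC {σ : Type} : Cluster σ → List (CTree σ)
  | .param => []
  | .node (_, _) l => muF l

mutual
/-- The number of nodes of a cluster. -/
def csizeT {σ : Type} : Cluster σ → Nat
  | .param => 0
  | .node _ l => 1 + csizeF l
def csizeF {σ : Type} : List (Cluster σ) → Nat
  | [] => 0
  | t :: ts => csizeT t + csizeF ts
end

mutual
/-- Vertical merge: replace the marked bottom boundary node of a cluster by
the cluster `t`. -/
def vmergeT {σ : Type} (t : Cluster σ) : Cluster σ → Cluster σ
  | .param => .param
  | .node (a, b) l => if b then t else .node (a, false) (vmergeF t l)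
def vmergeF {σ : Type} (t : Cluster σ) : List (Cluster σ) → List (Cluster σ)
  | [] => []
  | s :: ss => vmergeT t s :: vmergeF t ss
end

theorem muF_append {σ : Type} (f g : List (Cluster σ)) :
    muF (f ++ g) = muF f ++ muF g := by
  induction f with
  | nil => simp [muF]
  | cons t ts ih => simp [muF, ih]

mutual
theorem nmT {σ : Type} (g : List (CTree σ)) (u : Cluster σ) (t : Cluster σ)
    (ht : goodT t) (hm : markLabelsT t = []) :
    substT g (muT t) = [muT t] ∧ vmergeT u t = t := by
  cases t with
  | param => exact absurd ht (by simp [goodT])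
  | node p l =>
    obtain ⟨a, b⟩ := p
    cases b with
    | true => simp [markLabelsT] at hm
    | false =>
      have := nmF g u l ht.2 (by simpa [markLabelsT] using hm)
      simp [muT, vmergeT, substT, this.1, this.2]
theorem nmF {σ : Type} (g : List (CTree σ)) (u : Cluster σ) (l : List (Cluster σ))
    (hl : goodF l) (hm : markLabelsF l = []) :
    substF g (muF l) = muF l ∧ vmergeF u l = l := by
  cases l with
  | nil => simp [muF, substF, vmergeF]
  | cons t ts =>
    simp only [markLabelsF, List.append_eq_nil_iff] at hm
    have h1 := nmT g u t hl.1 hm.1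
    have h2 := nmF g u ts hl.2 hm.2
    simp [muF, substF, vmergeF, h1.1, h1.2, h2.1, h2.2]
end

mutual
theorem mainT {σ : Type} (a : σ) (l : List (Cluster σ)) (s : Cluster σ)
    (hs : goodT s) (hm : markLabelsT s = [a]) :
    substT (muF l) (muT s) = [muT (vmergeT (.node (a, false) l) s)] := by
  cases s with
  | param => exact absurd hs (by simp [goodT])
  | node p ls =>
    obtain ⟨c, b⟩ := p
    cases b with
    | true =>
      have hnil : ls = [] := hs.1 rfl
      subst hnil
      simp only [markLabelsT, markLabelsF, if_true, List.append_nil] at hm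
      have : c = a := by simpa using hm
      subst this
      simp [muT, vmergeT, substT, substF]
    | false =>
      have := mainF a l ls hs.2 (by simpa [markLabelsT] using hm)
      simp [muT, vmergeT, substT, this]
theorem mainF {σ : Type} (a : σ) (l : List (Cluster σ)) (ls : List (Cluster σ))
    (hls : goodF ls) (hm : markLabelsF ls = [a]) :
    substF (muF l) (muF ls) = muF (vmergeF (.node (a, false) l) ls) := by
  cases ls with
  | nil => simp [markLabelsF] at hm
  | cons t ts =>
    simp only [markLabelsF] at hm
    cases h1 : markLabelsT t with
    | nil =>
      have h2 : markLabelsF ts = [a] := by simpa [h1] using hm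
      have ht := nmT (muF l) (CTree.node (a, false) l) t hls.1 h1
      have := mainF a l ts hls.2 h2
      simp [muF, substF, vmergeF, ht.1, ht.2, this]
    | cons x xs =>
      rw [h1] at hm
      have hx : x = a ∧ xs ++ markLabelsF ts = [] := by
        have := hm
        cases xs with
        | nil =>
          simp at this
          exact ⟨this.1, by simp [this.2]⟩
        | cons y ys => simp at this
      obtain ⟨hx1, hx2⟩ := hx
      have hxs : xs = [] := by
        cases xs with
        | nil => rfl
        | cons _ _ => simp at hx2
      subst hxs
      have h2 : markLabelsF ts = [] := by simpa using hx2
      have ht := mainT a l t hls.1 (by simp [h1, hx1])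
      have hts := nmF (muF l) (CTree.node (a, false) l) ts hls.2 h2
      simp [muF, substF, vmergeF, ht, hts.1, hts.2]
end

/-- `φ` turns the cluster merges into the forest-algebra operations:
`φ(s) ⊡ φ(t) = φ(s ⊙ t)` whenever the horizontal merge is defined, and
`φ(s) ⊟ φ(t) = φ(s ⊘ t)` whenever the vertical merge is defined. -/
theorem phi_cluster_hom {σ : Type} :
    (∀ (a : σ) (f g : List (Cluster σ)), goodF f → goodF g →
      f ≠ [] → g ≠ [] → marksF f + marksF g ≤ 1 →
      phiC (.node (a, false) f) ++ phiC (.node (a, false) g) =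
        phiC (.node (a, false) (f ++ g))) ∧
    (∀ (s : Cluster σ) (a : σ) (l : List (Cluster σ)), goodT s →
      goodT (.node (a, false) l) → csizeT s ≥ 2 → l ≠ [] →
      marksT s = 1 → marksF l ≤ 1 → markLabelsT s = [a] →
      substF (phiC (.node (a, false) l)) (phiC s) =
        phiC (vmergeT (.node (a, false) l) s)) := by
  constructor
  · intro a f g _ _ _ _ _
    simp [phiC, muF_append]
  · intro s a l hs _ hsz _ _ _ hml
    cases s with
    | param => exact absurd hs (by simp [goodT])
    | node p ls =>
      obtain ⟨c, b⟩ := p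
      cases b with
      | true =>
        have hnil : ls = [] := hs.1 rfl
        subst hnil
        simp [csizeT, csizeF] at hsz
      | false =>
        have := mainF a l ls hs.2 (by simpa [markLabelsT] using hml)
        simp [phiC, vmergeT, this]
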